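/- Let (X,d,μ) be a doubling metric measure space with doubling constant γ (i.e. μ(B(x,2r)) ≤ γ μ(B(x,r)) for all x, r > 0), and suppose ∫_1^∞ dτ/μ(B(x,τ)) < ∞ for some (hence all) x. Define K(x,y) = ∫_{d(x,y)}^∞ dτ/μ(B(x,τ)). Then for all x, y ∈ X: γ^{-1} K(y,x) ≤ K(x,y) ≤ γ K(y,x). -/

import Mathlib

open MeasureTheory Metric

/-- The kernel `K(x,y) = ∫_{d(x,y)}^∞ dτ / μ(B(x,τ))`. -/
noncomputable def Kker {X : Type*} [MetricSpace X] [MeasurableSpace X]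
    (μ : Measure X) (x y : X) : ℝ :=
  ∫ τ in Set.Ioi (dist x y), ((μ (ball x τ)).toReal)⁻¹

lemma Kker_integrable {X : Type*} [MetricSpace X] [MeasurableSpace X]
    (μ : Measure X)
    (hball : ∀ (x : X) (r : ℝ), 0 < r → 0 < μ (ball x r) ∧ μ (ball x r) < ⊤)
    (hint : ∀ x : X,
      IntegrableOn (fun τ => ((μ (ball x τ)).toReal)⁻¹) (Set.Ioi 1))
    (x : X) (d : ℝ) (hd : 0 < d) :
    IntegrableOn (fun τ => ((μ (ball x τ)).toReal)⁻¹) (Set.Ioi d) := by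
  have hsub : Set.Ioi d ⊆ Set.Icc d 1 ∪ Set.Ioi 1 := by
    intro τ hτ
    rcases le_or_gt τ 1 with h | h
    · exact Or.inl ⟨le_of_lt hτ, h⟩
    · exact Or.inr h
  have hanti : AntitoneOn (fun τ => ((μ (ball x τ)).toReal)⁻¹) (Set.Icc d 1) := by
    intro a ha b hb hab
    have ha0 : 0 < a := lt_of_lt_of_le hd ha.1
    have h1 : μ (ball x a) ≤ μ (ball x b) := measure_mono (ball_subset_ball hab)
    have hb_fin := (hball x b (lt_of_lt_of_le hd hb.1)).2
    have ha_pos := (hball x a ha0).1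
    have h2 : (μ (ball x a)).toReal ≤ (μ (ball x b)).toReal :=
      ENNReal.toReal_mono hb_fin.ne h1
    have h3 : 0 < (μ (ball x a)).toReal :=
      ENNReal.toReal_pos ha_pos.ne' (lt_of_le_of_lt h1 hb_fin).ne
    exact inv_anti₀ h3 h2
  have hIcc : IntegrableOn (fun τ => ((μ (ball x τ)).toReal)⁻¹) (Set.Icc d 1) :=
    AntitoneOn.integrableOn_isCompact isCompact_Icc hanti
  exact ((hIcc.union (hint x)).mono_set hsub)

lemma Kker_key {X : Type*} [MetricSpace X] [MeasurableSpace X]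
    (μ : Measure X) (γ : ℝ) (hγ : 0 < γ)
    (hball : ∀ (x : X) (r : ℝ), 0 < r → 0 < μ (ball x r) ∧ μ (ball x r) < ⊤)
    (hdoub : ∀ (x : X) (r : ℝ), 0 < r →
      μ (ball x (2 * r)) ≤ ENNReal.ofReal γ * μ (ball x r))
    (hint : ∀ x : X,
      IntegrableOn (fun τ => ((μ (ball x τ)).toReal)⁻¹) (Set.Ioi 1))
    (x y : X) (hxy : x ≠ y) : Kker μ x y ≤ γ * Kker μ y x := by
  set d := dist x y with hdd
  have hd : 0 < d := dist_pos.2 hxy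
  have hdyx : dist y x = d := dist_comm y x
  have hIx := Kker_integrable μ hball hint x d hd
  have hIy := Kker_integrable μ hball hint y d hd
  have hpt : ∀ τ ∈ Set.Ioi d,
      ((μ (ball x τ)).toReal)⁻¹ ≤ γ * ((μ (ball y τ)).toReal)⁻¹ := by
    intro τ hτ
    have hτ' : d < τ := hτ
    have hτ0 : 0 < τ := hd.trans hτ'
    have hsub : ball y τ ⊆ ball x (2 * τ) := by
      intro z hz
      have h1 : dist z x ≤ dist z y + dist y x := dist_triangle z y x
      have hz' : dist z y < τ := mem_ball.1 hz
      have : dist z x < τ + d := by linarith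
      simp only [mem_ball]
      linarith
    have h1 : μ (ball y τ) ≤ ENNReal.ofReal γ * μ (ball x τ) :=
      le_trans (measure_mono hsub) (hdoub x τ hτ0)
    have hx_fin := (hball x τ hτ0).2
    have hy_fin := (hball y τ hτ0).2
    have hx_pos := (hball x τ hτ0).1
    have hy_pos := (hball y τ hτ0).1
    set a := (μ (ball y τ)).toReal with ha
    set b := (μ (ball x τ)).toReal with hb
    have hab : a ≤ γ * b := by
      have hfin : (ENNReal.ofReal γ * μ (ball x τ)) ≠ ⊤ :=
        ENNReal.mul_ne_top ENNReal.ofReal_ne_top hx_fin.ne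
      have := ENNReal.toReal_mono hfin h1
      rwa [ENNReal.toReal_mul, ENNReal.toReal_ofReal hγ.le] at this
    have ha0 : 0 < a := ENNReal.toReal_pos hy_pos.ne' hy_fin.ne
    have hb0 : 0 < b := ENNReal.toReal_pos hx_pos.ne' hx_fin.ne
    have h4 : (γ * b)⁻¹ ≤ a⁻¹ := inv_anti₀ ha0 hab
    calc b⁻¹ = γ * (γ * b)⁻¹ := by field_simp
      _ ≤ γ * a⁻¹ := mul_le_mul_of_nonneg_left h4 hγ.le
  have hmono := setIntegral_mono_on hIx (hIy.const_mul γ) measurableSet_Ioi hpt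
  have heq : ∫ τ in Set.Ioi d, γ * ((μ (ball y τ)).toReal)⁻¹
      = γ * ∫ τ in Set.Ioi d, ((μ (ball y τ)).toReal)⁻¹ :=
    integral_const_mul γ _
  rw [Kker, Kker, ← hdd, hdyx]
  calc (∫ τ in Set.Ioi d, ((μ (ball x τ)).toReal)⁻¹)
      ≤ ∫ τ in Set.Ioi d, γ * ((μ (ball y τ)).toReal)⁻¹ := hmono
    _ = γ * ∫ τ in Set.Ioi d, ((μ (ball y τ)).toReal)⁻¹ := heq

/-- On a doubling metric measure space, `γ⁻¹ K(y,x) ≤ K(x,y) ≤ γ K(y,x)`. -/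
theorem stmt1 {X : Type*} [MetricSpace X] [MeasurableSpace X]
    (μ : Measure X) (γ : ℝ) (hγ : 0 < γ)
    (hball : ∀ (x : X) (r : ℝ), 0 < r → 0 < μ (ball x r) ∧ μ (ball x r) < ⊤)
    (hdoub : ∀ (x : X) (r : ℝ), 0 < r →
      μ (ball x (2 * r)) ≤ ENNReal.ofReal γ * μ (ball x r))
    (hint : ∀ x : X,
      IntegrableOn (fun τ => ((μ (ball x τ)).toReal)⁻¹) (Set.Ioi 1)) :
    ∀ x y : X, γ⁻¹ * Kker μ y x ≤ Kker μ x y ∧ Kker μ x y ≤ γ * Kker μ y x := by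
  intro x y
  -- γ ≥ 1
  have hγ1 : 1 ≤ γ := by
    have h1 := hdoub x 1 one_pos
    have h2 : μ (ball x 1) ≤ μ (ball x (2 * 1)) :=
      measure_mono (ball_subset_ball (by norm_num))
    have h3 : μ (ball x 1) ≤ ENNReal.ofReal γ * μ (ball x 1) := h2.trans h1
    have hpos := (hball x 1 one_pos).1
    have hfin := (hball x 1 one_pos).2
    by_contra hlt
    push_neg at hlt
    have : ENNReal.ofReal γ * μ (ball x 1) < 1 * μ (ball x 1) := by
      apply ENNReal.mul_lt_mul_iff_left hpos.ne' hfin.ne |>.2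
      exact_mod_cast (ENNReal.ofReal_lt_one.2 hlt)
    rw [one_mul] at this
    exact absurd h3 (not_le.2 this)
  rcases eq_or_ne x y with rfl | hxy
  · have hK : 0 ≤ Kker μ x x :=
      integral_nonneg fun τ => inv_nonneg.2 ENNReal.toReal_nonneg
    constructor
    · calc γ⁻¹ * Kker μ x x ≤ 1 * Kker μ x x :=
        mul_le_mul_of_nonneg_right (inv_le_one_of_one_le₀ hγ1) hK
        _ = Kker μ x x := one_mul _
    · calc Kker μ x x = 1 * Kker μ x x := (one_mul _).symm
        _ ≤ γ * Kker μ x x := mul_le_mul_of_nonneg_right hγ1 hK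
  · constructor
    · have h := Kker_key μ γ hγ hball hdoub hint y x hxy.symm
      calc γ⁻¹ * Kker μ y x ≤ γ⁻¹ * (γ * Kker μ x y) :=
        mul_le_mul_of_nonneg_left h (inv_nonneg.2 hγ.le)
        _ = Kker μ x y := by field_simp
    · exact Kker_key μ γ hγ hball hdoub hint x y hxy
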